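/- arXiv:2309.04192 — 4 statements merged into one kernel-verified Lean document; each statement's English description precedes it below -/
import Mathlib

section
/- Let $f$ be the bistable reaction term $f(p) = b_1 d_2 s_h \frac{p(1-p)(p-\theta)}{b_1(1-p)(1-s_h p)+b_2 p}$ with $d_1 \le d_2 \le b_2 \le b_1$, all positive, $s_h \in (0,1]$, and $\theta \in (0,1)$. Then $f''$ admits exactly one zero $\theta_2$ in $(0,1)$, and $f''(p) > 0$ for $p \in (0,\theta_2)$, $f''(p) < 0$ for $p \in (\theta_2, 1)$. -/
/-!
Write `f = N / D` with `N` cubic and `D(p) = b1 (1 - p)(1 - sh p) + b2 p > 0` on `(0, 1)`; then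
`f'' = 2 b1 d2 sh R / D³` for a cubic `R`. The definition of `θ` says exactly that
`b1 (1 - sh θ) = d1 b2 / d2`, which lies in `(0, b2]`; this makes `R(0) > 0`, `R(1) < 0` and the
leading coefficient of `R` positive. Two zeros `x < y` of `R` in `(0, 1)` are then impossible: the
third divided difference of `R` on `0, x, y, 1` is its leading coefficient, but evaluates to a
negative number. So `R` has a single zero in `(0, 1)`, at which it changes sign, and so does `f''`.
-/

open Set Topology Polynomial

theorem cubic_eq_zero_subsingleton {Q : ℝ → ℝ} {c0 c1 c2 c3 a b : ℝ}
    (hQ : ∀ t, Q t = c0 + c1 * t + c2 * t ^ 2 + c3 * t ^ 3) (hc3 : 0 < c3)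
    (ha : 0 < Q a) (hb : Q b < 0) :
    {x ∈ Ioo a b | Q x = 0}.Subsingleton := by
  suffices h : ∀ x y, a < x → x < y → y < b → Q x = 0 → Q y ≠ 0 by
    rintro x ⟨⟨hax, hxb⟩, hx⟩ y ⟨⟨hay, hyb⟩, hy⟩
    rcases lt_trichotomy x y with hxy | rfl | hxy
    · exact absurd hy (h x y hax hxy hyb hx)
    · rfl
    · exact absurd hx (h y x hay hxy hxb hy)
  intro x y hax hxy hyb hx hy
  -- the third divided difference of a cubic on the nodes `a, x, y, b` is its leading coefficient
  have hdd : c3 * ((x - a) * (y - a) * (b - x) * (b - y) * (b - a) * (y - x)) =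
      -((b - x) * (b - y) * (y - x)) * Q a + (y - a) * (b - y) * (b - a) * Q x
        - (x - a) * (b - x) * (b - a) * Q y + (x - a) * (y - a) * (y - x) * Q b := by
    simp only [hQ]; ring
  rw [hx, hy] at hdd
  have hxa := sub_pos.2 hax
  have hya := sub_pos.2 (hax.trans hxy)
  have hbx := sub_pos.2 (hxy.trans hyb)
  have hby := sub_pos.2 hyb
  have hyx := sub_pos.2 hxy
  have hba := sub_pos.2 (hax.trans (hxy.trans hyb))
  have : 0 < c3 * ((x - a) * (y - a) * (b - x) * (b - y) * (b - a) * (y - x)) := by positivity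
  nlinarith [mul_pos (mul_pos (mul_pos hbx hby) hyx) ha,
    mul_pos (mul_pos (mul_pos hxa hya) hyx) (neg_pos.2 hb)]

theorem exists_sign_change_of_subsingleton {Q : ℝ → ℝ} {a b : ℝ} (hab : a ≤ b)
    (hQ : ContinuousOn Q (Icc a b)) (ha : 0 < Q a) (hb : Q b < 0)
    (huniq : {x ∈ Ioo a b | Q x = 0}.Subsingleton) :
    ∃ c ∈ Ioo a b, Q c = 0 ∧
      ∀ p ∈ Ioo a b, (p < c → 0 < Q p) ∧ (c < p → Q p < 0) := by
  obtain ⟨c, hc, hQc⟩ := intermediate_value_Ioo' hab hQ ⟨hb, ha⟩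
  refine ⟨c, hc, hQc, fun p hp => ⟨fun hpc => ?_, fun hcp => ?_⟩⟩
  · by_contra! hQp
    obtain ⟨z, hz, hQz⟩ := intermediate_value_Icc' hp.1.le (hQ.mono (Icc_subset_Icc le_rfl hp.2.le))
      ⟨hQp, ha.le⟩
    have hza : a < z := hz.1.lt_of_ne (by rintro rfl; exact ha.ne' hQz)
    have := huniq ⟨⟨hza, hz.2.trans_lt hp.2⟩, hQz⟩ ⟨hc, hQc⟩
    linarith [hz.2]
  · by_contra! hQp
    obtain ⟨z, hz, hQz⟩ := intermediate_value_Icc' hp.2.le (hQ.mono (Icc_subset_Icc hp.1.le le_rfl))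
      ⟨hb.le, hQp⟩
    have hzb : z < b := hz.2.lt_of_ne (by rintro rfl; exact hb.ne hQz)
    have := huniq ⟨⟨hp.1.trans_le hz.1, hzb⟩, hQz⟩ ⟨hc, hQc⟩
    linarith [hz.1]

theorem iteratedDeriv_two_div {N D N' D' N'' D'' : ℝ → ℝ}
    (hN : ∀ x, HasDerivAt N (N' x) x) (hN' : ∀ x, HasDerivAt N' (N'' x) x)
    (hD : ∀ x, HasDerivAt D (D' x) x) (hD' : ∀ x, HasDerivAt D' (D'' x) x)
    {p : ℝ} (hp : D p ≠ 0) :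
    iteratedDeriv 2 (fun x => N x / D x) p =
      (N'' p * D p ^ 2 - (2 * N' p * D' p + N p * D'' p) * D p + 2 * N p * D' p ^ 2) /
        D p ^ 3 := by
  have hD_cont : Continuous D := continuous_iff_continuousAt.2 fun x => (hD x).continuousAt
  have hderiv : deriv (fun x => N x / D x) =ᶠ[𝓝 p]
      fun x => (N' x * D x - N x * D' x) / D x ^ 2 := by
    filter_upwards [hD_cont.continuousAt.eventually_ne hp] with x hx
    exact ((hN x).div (hD x) hx).deriv
  have hderiv2 : HasDerivAt (fun x => (N' x * D x - N x * D' x) / D x ^ 2) _ p :=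
    (((hN' p).mul (hD p)).sub ((hN p).mul (hD' p))).div ((hD p).pow 2) (pow_ne_zero 2 hp)
  rw [iteratedDeriv_succ, iteratedDeriv_one, hderiv.deriv_eq, hderiv2.deriv]
  simp only [Pi.sub_apply, Pi.mul_apply]
  field_simp
  ring

def inflectionCubic (b1 b2 sh θ p : ℝ) : ℝ :=
  b1 * (b1 * (1 - sh * θ) + θ * b2) + -3 * b1 ^ 2 * (1 - sh * θ) * p
    + 3 * b1 * (b1 * (1 - sh * θ) - b2) * p ^ 2
    + (sh * b1 * b2 + (b1 - b2) * (b2 - b1 * (1 - sh * θ))) * p ^ 3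

theorem iteratedDeriv_two_eq_inflectionCubic (K b1 b2 sh θ : ℝ) {f : ℝ → ℝ}
    (hf : ∀ p, f p = K * (p * (1 - p) * (p - θ)) / (b1 * (1 - p) * (1 - sh * p) + b2 * p))
    {p : ℝ} (hp : b1 * (1 - p) * (1 - sh * p) + b2 * p ≠ 0) :
    iteratedDeriv 2 f p =
      2 * K * inflectionCubic b1 b2 sh θ p / (b1 * (1 - p) * (1 - sh * p) + b2 * p) ^ 3 := by
  let N : ℝ[X] := C K * (X * (1 - X) * (X - C θ))
  let D : ℝ[X] := C b1 * (1 - X) * (1 - C sh * X) + C b2 * X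
  have hfND : f = fun x => N.eval x / D.eval x := by
    funext x; simp [hf, N, D]
  rw [hfND, iteratedDeriv_two_div (fun x => N.hasDerivAt x)
    (fun x => N.derivative.hasDerivAt x) (fun x => D.hasDerivAt x)
    (fun x => D.derivative.hasDerivAt x) (by simpa [D] using hp)]
  simp only [N, D, inflectionCubic, derivative_mul, derivative_C, zero_mul, derivative_X, one_mul,
    derivative_sub, derivative_one, zero_sub, mul_neg, mul_one, sub_zero, zero_add, derivative_add,
    derivative_neg, eval_mul, eval_C, eval_add, eval_neg, eval_one, eval_sub, eval_X, neg_mul,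
    neg_neg, mul_zero, add_zero]
  ring

theorem inflectionCubic_zero_pos {b1 b2 sh θ : ℝ} (hb1 : 0 < b1) (hb2 : 0 ≤ b2) (hθ : 0 ≤ θ)
    (hd : 0 < b1 * (1 - sh * θ)) : 0 < inflectionCubic b1 b2 sh θ 0 := by
  simp only [inflectionCubic]
  nlinarith [mul_nonneg hθ hb2]

theorem inflectionCubic_one_neg {b1 b2 sh θ : ℝ} (hb1 : 0 ≤ b1) (hb2 : 0 < b2) (hsh : sh ≤ 1)
    (hθ : θ ≤ 1) : inflectionCubic b1 b2 sh θ 1 < 0 := by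
  have h : inflectionCubic b1 b2 sh θ 1 = -(b2 * (b2 + b1 * ((1 - θ) * (1 - sh)))) := by
    simp only [inflectionCubic]; ring
  rw [h, neg_neg_iff_pos]
  have : 0 ≤ b1 * ((1 - θ) * (1 - sh)) := by
    have := sub_nonneg.2 hθ; have := sub_nonneg.2 hsh; positivity
  positivity

theorem inflectionCubic_leadingCoeff_pos {b1 b2 sh θ : ℝ} (hb2 : 0 < b2) (hbb : b2 ≤ b1)
    (hsh : 0 < sh) (hd : b1 * (1 - sh * θ) ≤ b2) :
    0 < sh * b1 * b2 + (b1 - b2) * (b2 - b1 * (1 - sh * θ)) := by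
  have := sub_nonneg.2 hbb; have := sub_nonneg.2 hd
  have : 0 < b1 := hb2.trans_le hbb
  positivity

theorem bistable_denominator_pos {b1 b2 sh p : ℝ} (hb1 : 0 ≤ b1) (hb2 : 0 < b2) (hsh : sh ≤ 1)
    (hp : p ∈ Ioo (0 : ℝ) 1) : 0 < b1 * (1 - p) * (1 - sh * p) + b2 * p := by
  have h1 : 0 ≤ 1 - p := by linarith [hp.2]
  have h2 : 0 ≤ 1 - sh * p := by nlinarith [hp.1, hp.2]
  have := hp.1
  positivity

theorem f_second_deriv_unique_zero (b1 b2 d1 d2 sh θ : ℝ)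
    (hd1 : 0 < d1) (h12 : d1 ≤ d2) (h2b : d2 ≤ b2) (hbb : b2 ≤ b1)
    (hsh : sh ∈ Ioc (0:ℝ) 1)
    (hθdef : θ = (1 / sh) * (1 - d1 * b2 / (d2 * b1)))
    (hθ : θ ∈ Ioo (0:ℝ) 1) (f : ℝ → ℝ)
    (hf : ∀ p, f p = b1 * d2 * sh * (p * (1 - p) * (p - θ)) /
      (b1 * (1 - p) * (1 - sh * p) + b2 * p)) :
    ∃ θ2 ∈ Ioo (0:ℝ) 1, iteratedDeriv 2 f θ2 = 0 ∧
      ∀ p ∈ Ioo (0:ℝ) 1,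
        (p < θ2 → 0 < iteratedDeriv 2 f p) ∧ (θ2 < p → iteratedDeriv 2 f p < 0) := by
  obtain ⟨hsh0, hsh1⟩ := hsh
  obtain ⟨hθ0, hθ1⟩ := hθ
  have hd2 : 0 < d2 := hd1.trans_le h12
  have hb2 : 0 < b2 := hd2.trans_le h2b
  have hb1 : 0 < b1 := hb2.trans_le hbb
  have hd : b1 * (1 - sh * θ) = d1 * b2 / d2 := by
    rw [hθdef]; field_simp; ring
  have hd_pos : 0 < b1 * (1 - sh * θ) := by rw [hd]; positivity
  have hd_le : b1 * (1 - sh * θ) ≤ b2 := by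
    rw [hd, div_le_iff₀ hd2]; nlinarith
  have hR0 := inflectionCubic_zero_pos hb1 hb2.le hθ0.le hd_pos
  have hR1 := inflectionCubic_one_neg hb1.le hb2 hsh1 hθ1.le
  obtain ⟨θ2, hθ2, hRθ2, hsign⟩ := exists_sign_change_of_subsingleton zero_le_one
    (by unfold inflectionCubic; fun_prop) hR0 hR1
    (cubic_eq_zero_subsingleton (fun _ => rfl)
      (inflectionCubic_leadingCoeff_pos hb2 hbb hsh0 hd_le) hR0 hR1)
  have hf2 : ∀ p ∈ Ioo (0 : ℝ) 1, iteratedDeriv 2 f p =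
      2 * (b1 * d2 * sh) / (b1 * (1 - p) * (1 - sh * p) + b2 * p) ^ 3 *
        inflectionCubic b1 b2 sh θ p := fun p hp => by
    rw [iteratedDeriv_two_eq_inflectionCubic _ b1 b2 sh θ hf
      (bistable_denominator_pos hb1.le hb2 hsh1 hp).ne', mul_div_right_comm]
  refine ⟨θ2, hθ2, by rw [hf2 θ2 hθ2, hRθ2, mul_zero], fun p hp => ?_⟩
  have hscale : 0 < 2 * (b1 * d2 * sh) / (b1 * (1 - p) * (1 - sh * p) + b2 * p) ^ 3 := by
    have := bistable_denominator_pos hb1.le hb2 hsh1 hp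
    positivity
  rw [hf2 p hp]
  exact ⟨fun h => mul_pos hscale ((hsign p hp).1 h),
    fun h => mul_neg_of_pos_of_neg hscale ((hsign p hp).2 h)⟩
end

section
/- Let $\bar A, \bar B, \bar C, \bar D \in \mathbb{R}$ with $\bar A > 0$, $\bar B \le 0$, $\bar C < 0$, $\bar D > 0$, and suppose the cubic $R(p) = \bar A p^3 + \bar B p^2 + \bar C p + \bar D$ satisfies $R(1) < 0$ and has at least one root in $(0,1)$. Then $R$ has exactly one root in $[0,1]$. -/
open Set

theorem cubic_unique_root_in_unit_interval (A B C D : ℝ)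
    (hA : 0 < A) (hB : B ≤ 0) (hC : C < 0) (hD : 0 < D)
    (R : ℝ → ℝ) (hR : ∀ p, R p = A * p ^ 3 + B * p ^ 2 + C * p + D)
    (h1 : R 1 < 0) (hroot : ∃ x ∈ Ioo (0:ℝ) 1, R x = 0) :
    ∃! x, x ∈ Icc (0:ℝ) 1 ∧ R x = 0 := by
  obtain ⟨x, hx01, hxR⟩ := hroot
  refine ⟨x, ⟨⟨hx01.1.le, hx01.2.le⟩, hxR⟩, ?_⟩
  rintro y ⟨hy01, hyR⟩
  by_contra hne
  have hR0 : 0 < R 0 := by rw [hR]; simpa using hD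
  have hRc : Continuous R := by
    have : R = fun p => A * p ^ 3 + B * p ^ 2 + C * p + D := funext hR
    rw [this]; fun_prop
  set M : ℝ := max 1 ((-B - C + D + 1) / A) with hMdef
  have hM1 : (1 : ℝ) ≤ M := le_max_left _ _
  have hM2 : -B - C + D + 1 ≤ A * M := by
    have h := le_max_right 1 ((-B - C + D + 1) / A)
    rw [div_le_iff₀ hA] at h
    linarith [h]
  have hRM : 0 < R M := by
    rw [hR]
    nlinarith [sq_nonneg M, mul_nonneg (neg_nonneg.2 hC.le) (mul_nonneg (le_trans zero_le_one hM1) (sub_nonneg.2 hM1)), mul_le_mul_of_nonneg_right hM2 (sq_nonneg M)]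
  have hRN : R (-M) < 0 := by
    rw [hR]
    have hM0 : (0:ℝ) ≤ M := by linarith
    have hMM : (1:ℝ) ≤ M ^ 2 := by nlinarith
    nlinarith [mul_le_mul_of_nonneg_right hM2 (sq_nonneg M),
      mul_nonneg (neg_nonneg.2 hB) (sq_nonneg M),
      mul_nonneg (neg_nonneg.2 hC.le) (mul_nonneg hM0 (sub_nonneg.2 hM1)),
      mul_nonneg hD.le (sub_nonneg.2 hMM)]
  -- root z in (1, M]
  obtain ⟨z, hzmem, hzR⟩ : ∃ z ∈ Icc (1:ℝ) M, R z = 0 := by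
    have := intermediate_value_Icc hM1 hRc.continuousOn
    have h0 : (0:ℝ) ∈ Icc (R 1) (R M) := ⟨h1.le, hRM.le⟩
    obtain ⟨z, hz, hz0⟩ := this h0
    exact ⟨z, hz, hz0⟩
  have hz1 : 1 < z := lt_of_le_of_ne hzmem.1 (by rintro rfl; exact absurd hzR h1.ne)
  -- root w in [-M, 0)
  obtain ⟨w, hwmem, hwR⟩ : ∃ w ∈ Icc (-M) (0:ℝ), R w = 0 := by
    have := intermediate_value_Icc (by linarith : (-M:ℝ) ≤ 0) hRc.continuousOn
    have h0 : (0:ℝ) ∈ Icc (R (-M)) (R 0) := ⟨hRN.le, hR0.le⟩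
    obtain ⟨w, hw, hw0⟩ := this h0
    exact ⟨w, hw, hw0⟩
  have hw0 : w < 0 := lt_of_le_of_ne hwmem.2 (by rintro rfl; exact absurd hwR hR0.ne')
  -- polynomial machinery
  set P : Polynomial ℝ := Polynomial.C A * Polynomial.X ^ 3 + Polynomial.C B * Polynomial.X ^ 2
    + Polynomial.C C * Polynomial.X + Polynomial.C D with hPdef
  have hPeval : ∀ p, P.eval p = R p := by
    intro p; rw [hR]; simp [hPdef]
  have hPne : P ≠ 0 := by
    intro h
    have := hPeval 0
    rw [h] at this
    simp at this
    linarith [hR0, this]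
  have hdeg : P.natDegree ≤ 3 := by
    rw [hPdef]; compute_degree
  have hcard : P.roots.card ≤ 3 := le_trans (Polynomial.card_roots' P) hdeg
  have hmem : ∀ a, R a = 0 → a ∈ P.roots.toFinset := by
    intro a ha
    rw [Multiset.mem_toFinset, Polynomial.mem_roots hPne]
    rw [Polynomial.IsRoot, hPeval, ha]
  -- distinctness
  have hwx : w ≠ x := by linarith [hx01.1]
  have hwy : w ≠ y := by have := hy01.1; intro h; rw [h] at hw0; linarith
  have hwz : w ≠ z := by linarith
  have hxy : x ≠ y := fun h => hne h.symm
  have hxz : x ≠ z := by linarith [hx01.2]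
  have hyz : y ≠ z := by have := hy01.2; intro h; rw [h] at this; linarith
  have hsub : ({w, x, y, z} : Finset ℝ) ⊆ P.roots.toFinset := by
    intro a ha
    simp only [Finset.mem_insert, Finset.mem_singleton] at ha
    rcases ha with rfl | rfl | rfl | rfl
    · exact hmem _ hwR
    · exact hmem _ hxR
    · exact hmem _ hyR
    · exact hmem _ hzR
  have hcard4 : ({w, x, y, z} : Finset ℝ).card = 4 := by
    rw [Finset.card_insert_of_notMem (by simp [hwx, hwy, hwz]),
        Finset.card_insert_of_notMem (by simp [hxy, hxz]),
        Finset.card_insert_of_notMem (by simp [hyz])]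
    simp
  have : ({w, x, y, z} : Finset ℝ).card ≤ P.roots.card :=
    le_trans (Finset.card_le_card hsub) (Multiset.toFinset_card_le _)
  rw [hcard4] at this
  linarith
end

section
/- With the switch function $w_T$ as above, its derivative satisfies $\frac{\partial w_T}{\partial p_0}(p_0) = w_T(p_0)\, A(p_0)$, where $A(p_0) = \frac{g'(p_0)}{g(p_0)} - \frac{1}{1 - p(T;p_0)} e^{\int_0^T f'(p(s))ds} + \int_0^T f''(p(s))\, e^{\int_0^s f'(p(\sigma))d\sigma}\, ds$. In particular, $\partial_{p_0} w_T$ and $A$ have opposite signs pointwise (since $w_T < 0$). -/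
/-!
By the product rule, differentiating `w_T` needs two facts about the flow. First, `∂_{p₀} p(t;p₀) = exp(∫₀ᵗ f'(p(s;p₀)) ds)`, the solution of the
variational equation `E' = f'(p) E`, `E(0) = 1`: the linearization error
`p(t;q) - p(t;p₀) - E(t)(q - p₀)` satisfies a linear differential inequality whose forcing term
is a Taylor remainder of size `O((q - p₀)²)`, so Grönwall's inequality makes it `O((q - p₀)²)`.
Second, `∫₀ᵀ f'(p(s;p₀)) ds` may be differentiated under the integral sign, because `f''` and the
variational solution are bounded along trajectories.
-/

open Set Filter Topology Asymptotics MeasureTheory Real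

lemma gronwallBound_zero_mul (K ε c x : ℝ) :
    gronwallBound 0 K (ε * c) x = gronwallBound 0 K ε x * c := by
  by_cases hK : K = 0
  · simp only [hK, gronwallBound_K0]; ring
  · simp only [gronwallBound_of_K_ne_0 hK]; ring

lemma hasDerivAt_of_abs_sub_sub_le_sq {F : ℝ → ℝ} {c x₀ C : ℝ}
    (h : ∀ᶠ x in 𝓝 x₀, |F x - F x₀ - c * (x - x₀)| ≤ C * (x - x₀) ^ 2) :
    HasDerivAt F c x₀ := by
  rw [hasDerivAt_iff_isLittleO]
  refine (IsBigO.of_bound C ?_).trans_isLittleO (isLittleO_pow_sub_sub x₀ one_lt_two)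
  filter_upwards [h] with x hx
  simpa [mul_comm c] using hx

lemma continuous_of_forall_hasDerivAt {u u' : ℝ → ℝ} (hu : ∀ t, HasDerivAt u (u' t) t) :
    Continuous u :=
  continuous_iff_continuousAt.2 fun t => (hu t).continuousAt

lemma hasDerivAt_exp_integral {a : ℝ → ℝ} (ha : Continuous a) (t : ℝ) :
    HasDerivAt (fun σ => exp (∫ τ in (0:ℝ)..σ, a τ)) (a t * exp (∫ τ in (0:ℝ)..t, a τ)) t := by
  simpa [mul_comm] using (ha.integral_hasStrictDerivAt 0 t).hasDerivAt.exp

lemma Convex.abs_sub_le_of_abs_deriv_le {f f' : ℝ → ℝ} {s : Set ℝ} {C x y : ℝ}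
    (hs : Convex ℝ s) (hf : ∀ x ∈ s, HasDerivAt f (f' x) x) (hC : ∀ x ∈ s, |f' x| ≤ C)
    (hx : x ∈ s) (hy : y ∈ s) : |f y - f x| ≤ C * |y - x| := by
  simpa using hs.norm_image_sub_le_of_norm_hasDerivWithin_le
    (fun z hz => (hf z hz).hasDerivWithinAt) (fun z hz => by simpa using hC z hz) hx hy

lemma Convex.abs_sub_sub_mul_le_sq {f f' f'' : ℝ → ℝ} {s : Set ℝ} {M a b : ℝ}
    (hs : Convex ℝ s) (hf : ∀ x ∈ s, HasDerivAt f (f' x) x)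
    (hf' : ∀ x ∈ s, HasDerivAt f' (f'' x) x) (hM : ∀ x ∈ s, |f'' x| ≤ M)
    (ha : a ∈ s) (hb : b ∈ s) : |f b - f a - f' a * (b - a)| ≤ M * (b - a) ^ 2 := by
  have hab : uIcc a b ⊆ s := hs.ordConnected.uIcc_subset ha hb
  have hslope : ∀ x ∈ uIcc a b, |f' x - f' a| ≤ M * |b - a| := fun x hx =>
    (hs.abs_sub_le_of_abs_deriv_le hf' hM ha (hab hx)).trans
      (mul_le_mul_of_nonneg_left (abs_sub_left_of_mem_uIcc hx)
        ((abs_nonneg _).trans (hM a ha)))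
  have key := (convex_uIcc a b).abs_sub_le_of_abs_deriv_le (f := f - fun x => f' a * x)
    (fun x hx => by
      simpa using ((hf x (hab hx)).sub ((hasDerivAt_id' x).const_mul (f' a))))
    hslope left_mem_uIcc right_mem_uIcc
  calc |f b - f a - f' a * (b - a)| = |f b - f' a * b - (f a - f' a * a)| := by congr 1; ring
    _ ≤ M * |b - a| * |b - a| := key
    _ = M * (b - a) ^ 2 := by rw [mul_assoc, abs_mul_abs_self, sq]

lemma abs_sub_le_of_trajectories {f f' : ℝ → ℝ} {s : Set ℝ} {K t : ℝ} {u v : ℝ → ℝ}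
    (hs : Convex ℝ s) (hf : ∀ x ∈ s, HasDerivAt f (f' x) x) (hK : ∀ x ∈ s, |f' x| ≤ K)
    (hu : ∀ t, HasDerivAt u (f (u t)) t) (hv : ∀ t, HasDerivAt v (f (v t)) t)
    (hus : ∀ t, u t ∈ s) (hvs : ∀ t, v t ∈ s) (ht : 0 ≤ t) :
    |v t - u t| ≤ |v 0 - u 0| * exp (K * t) := by
  have := norm_le_gronwallBound_of_norm_deriv_right_le (f := fun σ => v σ - u σ)
    (a := 0) (b := t) (ε := 0)
    (fun σ _ => ((hv σ).sub (hu σ)).continuousAt.continuousWithinAt)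
    (fun σ _ => ((hv σ).sub (hu σ)).hasDerivWithinAt) le_rfl
    (fun σ _ => by simpa using hs.abs_sub_le_of_abs_deriv_le hf hK (hus σ) (hvs σ))
    t ⟨ht, le_rfl⟩
  simpa [gronwallBound_ε0] using this

lemma abs_sub_sub_mul_le_of_trajectories {f f' f'' E u v : ℝ → ℝ} {s : Set ℝ} {K M t : ℝ}
    (hs : Convex ℝ s) (hf : ∀ x ∈ s, HasDerivAt f (f' x) x)
    (hf' : ∀ x ∈ s, HasDerivAt f' (f'' x) x) (hK : ∀ x ∈ s, |f' x| ≤ K)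
    (hM : ∀ x ∈ s, |f'' x| ≤ M)
    (hu : ∀ t, HasDerivAt u (f (u t)) t) (hv : ∀ t, HasDerivAt v (f (v t)) t)
    (hus : ∀ t, u t ∈ s) (hvs : ∀ t, v t ∈ s)
    (hE : ∀ t, HasDerivAt E (f' (u t) * E t) t) (hE0 : E 0 = 1) (ht : 0 ≤ t) :
    |v t - u t - E t * (v 0 - u 0)|
      ≤ gronwallBound 0 K (M * exp (2 * K * t)) t * (v 0 - u 0) ^ 2 := by
  set δ := v 0 - u 0
  have hK0 : 0 ≤ K := (abs_nonneg _).trans (hK _ (hus 0))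
  have hM0 : 0 ≤ M := (abs_nonneg _).trans (hM _ (hus 0))
  have hdiff : ∀ σ, HasDerivAt (fun σ => v σ - u σ - E σ * δ)
      (f (v σ) - f (u σ) - f' (u σ) * E σ * δ) σ :=
    fun σ => ((hv σ).sub (hu σ)).sub ((hE σ).mul_const δ)
  -- the derivative of the error is `f'(u)` times the error plus a Taylor remainder of `f` at `u`
  have hbound : ∀ σ ∈ Ico 0 t, |f (v σ) - f (u σ) - f' (u σ) * E σ * δ|
      ≤ K * |v σ - u σ - E σ * δ| + M * exp (2 * K * t) * δ ^ 2 := by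
    intro σ hσ
    have hsep : (v σ - u σ) ^ 2 ≤ exp (2 * K * t) * δ ^ 2 := by
      have h := abs_sub_le_of_trajectories hs hf hK hu hv hus hvs hσ.1
      calc (v σ - u σ) ^ 2 = |v σ - u σ| ^ 2 := (sq_abs _).symm
        _ ≤ (|δ| * exp (K * σ)) ^ 2 := pow_le_pow_left₀ (abs_nonneg _) h 2
        _ = exp (2 * K * σ) * δ ^ 2 := by rw [mul_pow, sq_abs, sq (exp _), ← exp_add]; ring_nf
        _ ≤ exp (2 * K * t) * δ ^ 2 := by gcongr; exact hσ.2.le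
    have hlin : |f' (u σ) * (v σ - u σ - E σ * δ)| ≤ K * |v σ - u σ - E σ * δ| := by
      rw [abs_mul]; exact mul_le_mul_of_nonneg_right (hK _ (hus σ)) (abs_nonneg _)
    calc |f (v σ) - f (u σ) - f' (u σ) * E σ * δ|
        = |(f (v σ) - f (u σ) - f' (u σ) * (v σ - u σ))
            + f' (u σ) * (v σ - u σ - E σ * δ)| := by congr 1; ring
      _ ≤ M * (v σ - u σ) ^ 2 + K * |v σ - u σ - E σ * δ| :=
          (abs_add_le _ _).trans
            (add_le_add (hs.abs_sub_sub_mul_le_sq hf hf' hM (hus σ) (hvs σ)) hlin)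
      _ ≤ K * |v σ - u σ - E σ * δ| + M * exp (2 * K * t) * δ ^ 2 := by
          linarith [mul_le_mul_of_nonneg_left hsep hM0]
  have := norm_le_gronwallBound_of_norm_deriv_right_le (a := 0) (b := t) (δ := 0)
    (fun σ _ => (hdiff σ).continuousAt.continuousWithinAt)
    (fun σ _ => (hdiff σ).hasDerivWithinAt) (by simp [δ, hE0])
    (fun σ hσ => by simpa using hbound σ hσ) t ⟨ht, le_rfl⟩
  simpa [gronwallBound_zero_mul] using this

theorem hasDerivAt_flow_initial_value {f f' f'' : ℝ → ℝ} {s U : Set ℝ} {K M q₀ t : ℝ}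
    {P : ℝ → ℝ → ℝ} (hs : Convex ℝ s) (hf : ∀ x ∈ s, HasDerivAt f (f' x) x)
    (hf' : ∀ x ∈ s, HasDerivAt f' (f'' x) x) (hK : ∀ x ∈ s, |f' x| ≤ K)
    (hM : ∀ x ∈ s, |f'' x| ≤ M) (hU : U ∈ 𝓝 q₀)
    (hode : ∀ q ∈ U, ∀ t, HasDerivAt (fun σ => P σ q) (f (P t q)) t)
    (hstay : ∀ q ∈ U, ∀ t, P t q ∈ s) (hinit : ∀ q ∈ U, P 0 q = q) (ht : 0 ≤ t) :
    HasDerivAt (fun q => P t q) (exp (∫ σ in (0:ℝ)..t, f' (P σ q₀))) q₀ := by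
  have hq₀ := mem_of_mem_nhds hU
  have hf'c : ContinuousOn f' s := fun x hx => (hf' x hx).continuousAt.continuousWithinAt
  have hE := hasDerivAt_exp_integral (hf'c.comp_continuous
    (continuous_of_forall_hasDerivAt (hode q₀ hq₀)) (hstay q₀ hq₀))
  refine hasDerivAt_of_abs_sub_sub_le_sq (C := gronwallBound 0 K (M * exp (2 * K * t)) t) ?_
  filter_upwards [hU] with q hq
  simpa [hinit q hq, hinit q₀ hq₀] using abs_sub_sub_mul_le_of_trajectories hs hf hf' hK hM
    (hode q₀ hq₀) (hode q hq) (hstay q₀ hq₀) (hstay q hq) hE (by simp) ht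

theorem hasDerivAt_integral_comp_flow {f f' f'' : ℝ → ℝ} {s U : Set ℝ} {K M q₀ T : ℝ}
    {P : ℝ → ℝ → ℝ} (hs : Convex ℝ s) (hf : ∀ x ∈ s, HasDerivAt f (f' x) x)
    (hf' : ∀ x ∈ s, HasDerivAt f' (f'' x) x) (hK : ∀ x ∈ s, |f' x| ≤ K)
    (hM : ∀ x ∈ s, |f'' x| ≤ M) (hU : IsOpen U) (hq₀ : q₀ ∈ U)
    (hode : ∀ q ∈ U, ∀ t, HasDerivAt (fun σ => P σ q) (f (P t q)) t)
    (hstay : ∀ q ∈ U, ∀ t, P t q ∈ s) (hinit : ∀ q ∈ U, P 0 q = q) (hT : 0 ≤ T) :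
    HasDerivAt (fun q => ∫ σ in (0:ℝ)..T, f' (P σ q))
      (∫ σ in (0:ℝ)..T, f'' (P σ q₀) * exp (∫ τ in (0:ℝ)..σ, f' (P τ q₀))) q₀ := by
  have hP : ∀ q ∈ U, Continuous fun σ => P σ q := fun q hq =>
    continuous_of_forall_hasDerivAt (hode q hq)
  have hf'P : ∀ q ∈ U, Continuous fun σ => f' (P σ q) := fun q hq =>
    ContinuousOn.comp_continuous (fun x hx => (hf' x hx).continuousAt.continuousWithinAt)
      (hP q hq) (hstay q hq)
  -- `f''` need not be continuous, but along the trajectory it agrees with the measurable `deriv f'`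
  have hmeas : AEStronglyMeasurable
      (fun σ => f'' (P σ q₀) * exp (∫ τ in (0:ℝ)..σ, f' (P τ q₀))) := by
    refine (((measurable_deriv f').comp (hP q₀ hq₀).measurable).mul
      (continuous_of_forall_hasDerivAt (hasDerivAt_exp_integral (hf'P q₀ hq₀))).measurable
      ).aestronglyMeasurable.congr (ae_of_all _ fun σ => ?_)
    simp only [Pi.mul_apply, Function.comp_apply, (hf' _ (hstay q₀ hq₀ σ)).deriv]
  have hbound : Continuous fun σ => M * exp (K * σ) := by fun_prop
  refine (intervalIntegral.hasDerivAt_integral_of_dominated_loc_of_deriv_le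
    (F' := fun q σ => f'' (P σ q) * exp (∫ τ in (0:ℝ)..σ, f' (P τ q))) (hU.mem_nhds hq₀)
    (eventually_of_mem (hU.mem_nhds hq₀) fun q hq => (hf'P q hq).aestronglyMeasurable)
    ((hf'P q₀ hq₀).intervalIntegrable 0 T) hmeas.restrict ?_
    (hbound.intervalIntegrable 0 T) ?_).2
  · refine ae_of_all _ fun σ hσ q hq => ?_
    rw [uIoc_of_le hT] at hσ
    have hint : ∫ τ in (0:ℝ)..σ, f' (P τ q) ≤ K * σ := by
      have := intervalIntegral.norm_integral_le_of_norm_le_const (a := 0) (b := σ)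
        (fun τ _ => (Real.norm_eq_abs _).trans_le (hK _ (hstay q hq τ)))
      rw [sub_zero, abs_of_pos hσ.1] at this
      exact (le_abs_self _).trans this
    rw [norm_mul, Real.norm_eq_abs, Real.norm_eq_abs, abs_exp]
    exact mul_le_mul (hM _ (hstay q hq σ)) (exp_le_exp.2 hint) (exp_pos _).le
      ((abs_nonneg _).trans (hM _ (hstay q hq σ)))
  · refine ae_of_all _ fun σ hσ q hq => ?_
    rw [uIoc_of_le hT] at hσ
    exact (hf' _ (hstay q hq σ)).comp q
      (hasDerivAt_flow_initial_value hs hf hf' hK hM (hU.mem_nhds hq) hode hstay hinit hσ.1.le)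

theorem switch_function_derivative_factorization
    (f g : ℝ → ℝ) (hf : ContDiff ℝ 2 f) (hgC : ContDiff ℝ 1 g)
    (hg : ∀ q ∈ Ioo (0:ℝ) 1, 0 < g q)
    (P : ℝ → ℝ → ℝ) (hinit : ∀ q, P 0 q = q)
    (hode : ∀ q ∈ Ioo (0:ℝ) 1, ∀ t, HasDerivAt (fun s => P s q) (f (P t q)) t)
    (hstay : ∀ q ∈ Ioo (0:ℝ) 1, ∀ t, P t q ∈ Ioo (0:ℝ) 1)
    (T : ℝ) (hT : 0 < T) (w A : ℝ → ℝ)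
    (hw : ∀ q, w q = -g q * (1 - P T q) *
      Real.exp (∫ s in (0:ℝ)..T, deriv f (P s q)))
    (hA : ∀ q, A q = deriv g q / g q
      - Real.exp (∫ s in (0:ℝ)..T, deriv f (P s q)) / (1 - P T q)
      + ∫ s in (0:ℝ)..T,
          iteratedDeriv 2 f (P s q) * Real.exp (∫ σ in (0:ℝ)..s, deriv f (P σ q)))
    (p0 : ℝ) (hp0 : p0 ∈ Ioo (0:ℝ) 1) :
    HasDerivAt w (w p0 * A p0) p0 ∧ w p0 < 0 ∧
      (0 < w p0 * A p0 ↔ A p0 < 0) := by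
  have hf'd : Differentiable ℝ (deriv f) := by
    simpa using hf.differentiable_iteratedDeriv 1 (by norm_num)
  have hf' : ∀ x ∈ Ioo (0:ℝ) 1, HasDerivAt f (deriv f x) x := fun x _ =>
    (hf.differentiable (by norm_num) x).hasDerivAt
  have hf'' : ∀ x ∈ Ioo (0:ℝ) 1, HasDerivAt (deriv f) (iteratedDeriv 2 f x) x := fun x _ => by
    rw [iteratedDeriv_succ, iteratedDeriv_one]
    exact (hf'd x).hasDerivAt
  obtain ⟨K, hK⟩ := isCompact_Icc.exists_bound_of_continuousOn
    (hf.continuous_deriv (by norm_num)).continuousOn (s := Icc (0:ℝ) 1)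
  obtain ⟨M, hM⟩ := isCompact_Icc.exists_bound_of_continuousOn
    (hf.continuous_iteratedDeriv 2 le_rfl).continuousOn (s := Icc (0:ℝ) 1)
  have hK' : ∀ x ∈ Ioo (0:ℝ) 1, |deriv f x| ≤ K := fun x hx => hK x (Ioo_subset_Icc_self hx)
  have hM' : ∀ x ∈ Ioo (0:ℝ) 1, |iteratedDeriv 2 f x| ≤ M := fun x hx =>
    hM x (Ioo_subset_Icc_self hx)
  have hPT := hasDerivAt_flow_initial_value (convex_Ioo 0 1) hf' hf'' hK' hM'
    (isOpen_Ioo.mem_nhds hp0) hode hstay (fun q _ => hinit q) hT.le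
  have hI := hasDerivAt_integral_comp_flow (convex_Ioo 0 1) hf' hf'' hK' hM' isOpen_Ioo hp0
    hode hstay (fun q _ => hinit q) hT.le
  have hg' : HasDerivAt g (deriv g p0) p0 := (hgC.differentiable one_ne_zero p0).hasDerivAt
  have hgp : 0 < g p0 := hg p0 hp0
  have hPTp : 0 < 1 - P T p0 := sub_pos.2 (hstay p0 hp0 T).2
  have hw_neg : w p0 < 0 := by
    rw [hw, neg_mul, neg_mul, neg_lt_zero]
    positivity
  refine ⟨?_, hw_neg, smul_pos_iff_of_neg_left hw_neg⟩
  have hwd : HasDerivAt (fun q => -g q * (1 - P T q) *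
      Real.exp (∫ s in (0:ℝ)..T, deriv f (P s q))) _ p0 :=
    (hg'.neg.mul (hPT.const_sub 1)).mul hI.exp
  rw [← funext hw] at hwd
  refine hwd.congr_deriv ?_
  rw [hw, hA, Pi.mul_apply, Pi.neg_apply]
  field_simp
  ring
end

section
/- Let $\bar\theta = \max(\theta, \theta_2)$ where $\theta_2 \in (0,1)$ is the unique zero of $f''$ with $f'' < 0$ on $(\theta_2, 1)$. Then for every $T > 0$ and every $p_0 \in (\bar\theta, 1)$, one has $A(p_0) < 0$, and consequently $\frac{\partial w_T}{\partial p_0}(p_0) > 0$. -/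
open Set

theorem A_negative_above_thetabar (f g : ℝ → ℝ) (θ θ2 : ℝ)
    (hθ : θ ∈ Ioo (0:ℝ) 1) (hθ2 : θ2 ∈ Ioo (0:ℝ) 1)
    (hf2zero : iteratedDeriv 2 f θ2 = 0)
    (hf2neg : ∀ q ∈ Ioo θ2 (1:ℝ), iteratedDeriv 2 f q < 0)
    (hg : ∀ q ∈ Ioo (0:ℝ) 1, 0 < g q) (hg' : ∀ q ∈ Ioo (0:ℝ) 1, deriv g q < 0)
    (P : ℝ → ℝ → ℝ) (hinit : ∀ q, P 0 q = q)
    (hode : ∀ q ∈ Ioo (0:ℝ) 1, ∀ t, HasDerivAt (fun s => P s q) (f (P t q)) t)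
    (hstay : ∀ q ∈ Ioo (0:ℝ) 1, ∀ t, P t q ∈ Ioo (0:ℝ) 1)
    (hmono : ∀ q ∈ Ioo θ (1:ℝ), ∀ s t : ℝ, s ≤ t → P s q ≤ P t q)
    (T : ℝ) (hT : 0 < T) (w A : ℝ → ℝ)
    (hw : ∀ q, w q = -g q * (1 - P T q) *
      Real.exp (∫ s in (0:ℝ)..T, deriv f (P s q)))
    (hA : ∀ q, A q = deriv g q / g q
      - Real.exp (∫ s in (0:ℝ)..T, deriv f (P s q)) / (1 - P T q)
      + ∫ s in (0:ℝ)..T,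
          iteratedDeriv 2 f (P s q) * Real.exp (∫ σ in (0:ℝ)..s, deriv f (P σ q)))
    (hderiv : ∀ q ∈ Ioo (0:ℝ) 1, HasDerivAt w (w q * A q) q)
    (p0 : ℝ) (hp0 : p0 ∈ Ioo (max θ θ2) 1) :
    A p0 < 0 ∧ 0 < deriv w p0 := by
  have hp0I : p0 ∈ Ioo (0:ℝ) 1 :=
    ⟨lt_of_le_of_lt hθ.1.le (lt_of_le_of_lt (le_max_left θ θ2) hp0.1), hp0.2⟩
  have hp0θ : p0 ∈ Ioo θ 1 := ⟨lt_of_le_of_lt (le_max_left θ θ2) hp0.1, hp0.2⟩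
  have hPT := hstay p0 hp0I T
  have h1PT : 0 < 1 - P T p0 := by linarith [hPT.2]
  have hgpos := hg p0 hp0I
  have hterm1 : deriv g p0 / g p0 < 0 :=
    div_neg_of_neg_of_pos (hg' p0 hp0I) hgpos
  have hterm2 : 0 < Real.exp (∫ s in (0:ℝ)..T, deriv f (P s p0)) / (1 - P T p0) :=
    div_pos (Real.exp_pos _) h1PT
  have hterm3 : (∫ s in (0:ℝ)..T,
      iteratedDeriv 2 f (P s p0) * Real.exp (∫ σ in (0:ℝ)..s, deriv f (P σ p0))) ≤ 0 := by
    rw [← neg_nonneg, ← intervalIntegral.integral_neg]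
    apply intervalIntegral.integral_nonneg hT.le
    intro u hu
    rw [neg_nonneg]
    have hPu : P u p0 ∈ Ioo θ2 (1:ℝ) := by
      have hge : p0 ≤ P u p0 := by
        have := hmono p0 hp0θ 0 u hu.1
        rwa [hinit p0] at this
      exact ⟨lt_of_le_of_lt (le_max_right θ θ2) (lt_of_lt_of_le hp0.1 hge),
        (hstay p0 hp0I u).2⟩
    exact le_of_lt (mul_neg_of_neg_of_pos (hf2neg _ hPu) (Real.exp_pos _))
  have hAneg : A p0 < 0 := by
    rw [hA p0]; linarith
  refine ⟨hAneg, ?_⟩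
  have hwneg : w p0 < 0 := by
    rw [hw p0]
    have : -g p0 * (1 - P T p0) < 0 := mul_neg_of_neg_of_pos (by linarith) h1PT
    exact mul_neg_of_neg_of_pos this (Real.exp_pos _)
  have hd := (hderiv p0 hp0I).deriv
  rw [hd]
  exact mul_pos_of_neg_of_neg hwneg hAneg
end
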